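/- Let N ≥ 2, let σ be a proper divisor of N, and let i with 1 ≤ i ≤ N − 1 satisfy gcd(i,N) = σ. Then |Σ_{k=1}^{N−1} k·({ik/N} − {(N−i)k/N})| ≤ (1/6)(N/σ − 1)(N − 2σ), i.e. the maximum of this quantity over all such i is attained at i = σ (equivalently at i = N − σ). -/

import Mathlib

/-!
Write `N = m s` and `i = a s` with `gcd a m = 1`. Since `{(N - i) k / N} = {-a k / m}`, the summand
is `k · sawtooth (a k / m)` with `sawtooth x = {x} - {-x}`, an odd `1`-periodic function; hence
`∑_{r<m} sawtooth (a r / m) = 0`, and splitting `k = q m + r` shows the sum is `s` times the same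
sum for `(a, m)`. Substituting `r = (m / 2) (sawtooth (r / m) + 1)` turns the latter into
`(m / 2) ∑_r sawtooth (r / m) sawtooth (a r / m)`. As `r ↦ a r mod m` permutes the residues, both
factors have the same sum of squares, so by Cauchy–Schwarz this is at most its value at `a = 1`,
which is `(m - 1) (m - 2) / 6`.
-/

open Finset

section Sums

variable {R : Type*}

lemma Finset.sum_range_natCast_mul_two [CommRing R] (n : ℕ) :
    (∑ i ∈ range n, (i : R)) * 2 = n * (n - 1) := by
  induction n with
  | zero => simp
  | succ n ih => rw [sum_range_succ, add_mul, ih]; push_cast; ring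

lemma Finset.sum_range_natCast_sq_mul_six [CommRing R] (n : ℕ) :
    (∑ i ∈ range n, (i : R) ^ 2) * 6 = n * (n - 1) * (2 * n - 1) := by
  induction n with
  | zero => simp
  | succ n ih => rw [sum_range_succ, add_mul, ih]; push_cast; ring

lemma Function.Periodic.sum_range_mul_natCast_mul [CommSemiring R] {f : ℕ → R} {m : ℕ}
    (hf : Function.Periodic f m) (hsum : ∑ r ∈ range m, f r = 0) (s : ℕ) :
    ∑ k ∈ range (s * m), k * f k = s * ∑ r ∈ range m, r * f r := by
  induction s with
  | zero => simp
  | succ s ih =>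
    have hshift : ∀ r, f (s * m + r) = f r := fun r => by
      rw [add_comm]; exact hf.nat_mul s r
    rw [Nat.succ_mul, sum_range_add, ih]
    simp only [hshift, Nat.cast_add, Nat.cast_mul, add_mul, sum_add_distrib, ← mul_sum, hsum]
    ring

lemma Nat.Coprime.sum_range_mul_mod [AddCommMonoid R] {a m : ℕ} (h : a.Coprime m)
    (f : ℕ → R) : ∑ r ∈ range m, f (a * r % m) = ∑ r ∈ range m, f r := by
  have hmaps : Set.MapsTo (fun r => a * r % m) (range m) (range m) := fun r hr => by
    simp only [coe_range, Set.mem_Iio] at hr ⊢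
    exact Nat.mod_lt _ (by omega)
  have hinj : Set.InjOn (fun r => a * r % m) (range m) := fun r hr r' hr' hrr' => by
    simp only [coe_range, Set.mem_Iio] at hr hr'
    exact (Nat.ModEq.cancel_left_of_coprime h.symm hrr').eq_of_lt_of_lt hr hr'
  exact sum_nbij (g := f) _ hmaps hinj (surjOn_of_injOn_of_card_le _ hmaps hinj le_rfl)
    fun _ _ => rfl

lemma abs_sum_mul_le_sum_sq_of_sum_sq_eq [CommRing R] [LinearOrder R] [IsStrictOrderedRing R]
    {ι : Type*} (s : Finset ι) {f g : ι → R} (h : ∑ i ∈ s, g i ^ 2 = ∑ i ∈ s, f i ^ 2) :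
    |∑ i ∈ s, f i * g i| ≤ ∑ i ∈ s, f i ^ 2 := by
  refine abs_le_of_sq_le_sq ?_ (sum_nonneg fun i _ => sq_nonneg (f i))
  calc (∑ i ∈ s, f i * g i) ^ 2 ≤ (∑ i ∈ s, f i ^ 2) * ∑ i ∈ s, g i ^ 2 :=
        sum_mul_sq_le_sq_mul_sq s f g
    _ = (∑ i ∈ s, f i ^ 2) ^ 2 := by rw [h, sq]

end Sums

section Sawtooth

variable {R : Type*} [Ring R] [LinearOrder R] [FloorRing R]

/-- Twice the Dedekind sawtooth function `((x))`. -/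
def sawtooth (x : R) : R := Int.fract x - Int.fract (-x)

lemma sawtooth_neg (x : R) : sawtooth (-x) = -sawtooth x := by
  simp only [sawtooth, neg_neg, neg_sub]

@[simp]
lemma sawtooth_zero : sawtooth (0 : R) = 0 := by
  simp [sawtooth]

variable [IsOrderedRing R]

lemma sawtooth_add_intCast (x : R) (n : ℤ) : sawtooth (x + n) = sawtooth x := by
  rw [sawtooth, neg_add, ← Int.cast_neg, Int.fract_add_intCast, Int.fract_add_intCast, sawtooth]

lemma sawtooth_add_natCast (x : R) (n : ℕ) : sawtooth (x + n) = sawtooth x := by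
  exact_mod_cast sawtooth_add_intCast x n

lemma sawtooth_natCast (n : ℕ) : sawtooth (n : R) = 0 := by
  simp [sawtooth]

lemma sawtooth_natCast_sub (n : ℕ) (x : R) : sawtooth (n - x) = -sawtooth x := by
  rw [sub_eq_neg_add, sawtooth_add_natCast, sawtooth_neg]

end Sawtooth

variable {K : Type*} [Field K] [LinearOrder K] [IsStrictOrderedRing K] [FloorRing K]

lemma sawtooth_natCast_div {r m : ℕ} (hr : 0 < r) (hrm : r < m) :
    sawtooth ((r : K) / m) = 2 * r / m - 1 := by
  have hfract : Int.fract ((r : K) / m) = r / m := by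
    rw [Int.fract_div_natCast_eq_div_natCast_mod, Nat.mod_eq_of_lt hrm]
  have hm : (0 : K) < m := by exact_mod_cast hr.trans hrm
  have hr' : (0 : K) < r := by exact_mod_cast hr
  rw [sawtooth, Int.fract_neg (by rw [hfract]; positivity), hfract]
  field_simp
  ring

lemma sawtooth_natCast_div_mod (n m : ℕ) :
    sawtooth ((n : K) / m) = sawtooth (((n % m : ℕ) : K) / m) := by
  rcases eq_or_ne m 0 with rfl | hm
  · simp
  have hsplit : (n : K) / m = ((n % m : ℕ) : K) / m + (n / m : ℕ) := by
    field_simp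
    exact_mod_cast (Nat.mod_add_div n m).symm
  rw [hsplit, sawtooth_add_natCast]

lemma sawtooth_mul_div_periodic (a m : ℕ) :
    Function.Periodic (fun r : ℕ => sawtooth ((a : K) * r / m)) m := by
  intro r
  rcases eq_or_ne m 0 with rfl | hm
  · simp
  have hshift : (a : K) * (r + m : ℕ) / m = a * r / m + a := by
    push_cast
    field_simp
  simp only [hshift, sawtooth_add_natCast]

lemma sum_range_sawtooth_mul_div (a m : ℕ) : ∑ r ∈ range m, sawtooth ((a : K) * r / m) = 0 := by
  rcases eq_or_ne m 0 with rfl | hm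
  · simp
  have hreflect : ∀ r ∈ range (m + 1), sawtooth ((a : K) * (m + 1 - 1 - r : ℕ) / m)
      = -sawtooth ((a : K) * r / m) := fun r hr => by
    rw [Nat.add_sub_cancel, Nat.cast_sub (by simpa [Nat.lt_succ_iff] using hr),
      show (a : K) * (m - r) / m = a - a * r / m by field_simp, sawtooth_natCast_sub]
  have hodd := sum_range_reflect (fun r => sawtooth ((a : K) * r / m)) (m + 1)
  rw [sum_congr rfl hreflect, sum_neg_distrib, neg_eq_iff_add_eq_zero, ← two_mul,
    mul_eq_zero] at hodd
  have hlast : sawtooth ((a : K) * m / m) = 0 := by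
    rw [mul_div_cancel_right₀ _ (by positivity)]; exact sawtooth_natCast a
  simpa [sum_range_succ, hlast] using hodd

variable (K) in
def sawtoothMoment (a m : ℕ) : K := ∑ r ∈ range m, (r : K) * sawtooth ((a : K) * r / m)

lemma sum_Icc_mul_fract_sub_fract (i N : ℕ) :
    ∑ k ∈ Icc 1 (N - 1),
        (k : K) * (Int.fract ((i : K) * k / N) - Int.fract (((N : K) - i) * k / N))
      = sawtoothMoment K i N := by
  have hterm : ∀ k ∈ Icc 1 (N - 1),
      (k : K) * (Int.fract ((i : K) * k / N) - Int.fract (((N : K) - i) * k / N))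
        = k * sawtooth ((i : K) * k / N) := fun k hk => by
    have hN : (N : K) ≠ 0 := by
      have := mem_Icc.1 hk
      exact_mod_cast (by omega : N ≠ 0)
    rw [show ((N : K) - i) * k / N = k + -(i * k / N) by field_simp; ring, Int.fract_natCast_add,
      sawtooth]
  rw [sum_congr rfl hterm, sawtoothMoment]
  refine sum_subset (fun k hk => ?_) (fun k hk hk' => ?_)
  · simp only [mem_Icc, mem_range] at hk ⊢
    omega
  · obtain rfl : k = 0 := by
      simp only [mem_Icc, mem_range] at hk hk'
      omega
    simp

lemma sawtoothMoment_mul_right (a m s : ℕ) :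
    sawtoothMoment K (a * s) (m * s) = s * sawtoothMoment K a m := by
  rcases eq_or_ne s 0 with rfl | hs
  · simp [sawtoothMoment]
  have hcancel : ∀ k : ℕ, ((a * s : ℕ) : K) * k / (s * m : ℕ) = a * k / m := fun k => by
    push_cast
    rw [mul_right_comm, mul_comm (s : K), mul_div_mul_right _ _ (by exact_mod_cast hs)]
  simp only [sawtoothMoment, mul_comm m s, hcancel]
  exact (sawtooth_mul_div_periodic (K := K) a m).sum_range_mul_natCast_mul
    (sum_range_sawtooth_mul_div a m) s

lemma sawtoothMoment_eq_mul_sum_sawtooth_mul_sawtooth (a m : ℕ) :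
    sawtoothMoment K a m
      = m / 2 * ∑ r ∈ range m, sawtooth ((r : K) / m) * sawtooth ((a : K) * r / m) := by
  have hterm : ∀ r ∈ range m, (r : K) * sawtooth ((a : K) * r / m)
      = m / 2 * (sawtooth ((r : K) / m) * sawtooth ((a : K) * r / m))
        + m / 2 * sawtooth ((a : K) * r / m) := by
    intro r hr
    rcases Nat.eq_zero_or_pos r with rfl | hr0
    · simp
    have hm : (m : K) ≠ 0 := by exact_mod_cast (hr0.trans (mem_range.1 hr)).ne'
    rw [sawtooth_natCast_div hr0 (mem_range.1 hr)]
    field_simp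
    ring
  rw [sawtoothMoment, sum_congr rfl hterm, sum_add_distrib, ← mul_sum, ← mul_sum,
    sum_range_sawtooth_mul_div, mul_zero, add_zero]

lemma sawtoothMoment_one {m : ℕ} (hm : m ≠ 0) : sawtoothMoment K 1 m = (m - 1) * (m - 2) / 6 := by
  have hterm : ∀ r ∈ range m, (r : K) * sawtooth (((1 : ℕ) : K) * r / m) = 2 / m * r ^ 2 - r := by
    intro r hr
    rcases Nat.eq_zero_or_pos r with rfl | hr0
    · simp
    rw [Nat.cast_one, one_mul, sawtooth_natCast_div hr0 (mem_range.1 hr)]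
    ring
  have hm' : (m : K) ≠ 0 := by exact_mod_cast hm
  have hsum : ∑ r ∈ range m, (r : K) = m * (m - 1) / 2 :=
    eq_div_of_mul_eq two_ne_zero (sum_range_natCast_mul_two m)
  have hsum_sq : ∑ r ∈ range m, (r : K) ^ 2 = m * (m - 1) * (2 * m - 1) / 6 :=
    eq_div_of_mul_eq (by norm_num) (sum_range_natCast_sq_mul_six m)
  rw [sawtoothMoment, sum_congr rfl hterm, sum_sub_distrib, ← mul_sum, hsum, hsum_sq]
  field_simp
  ring

lemma abs_sawtoothMoment_le_sawtoothMoment_one {a m : ℕ} (h : a.Coprime m) :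
    |sawtoothMoment K a m| ≤ sawtoothMoment K 1 m := by
  have hsq : ∑ r ∈ range m, sawtooth ((a : K) * r / m) ^ 2
      = ∑ r ∈ range m, sawtooth ((r : K) / m) ^ 2 := by
    simp_rw [← Nat.cast_mul, sawtooth_natCast_div_mod (a * _) m]
    exact h.sum_range_mul_mod fun n => sawtooth ((n : K) / m) ^ 2
  rw [sawtoothMoment_eq_mul_sum_sawtooth_mul_sawtooth,
    sawtoothMoment_eq_mul_sum_sawtooth_mul_sawtooth, abs_mul, abs_of_nonneg (by positivity)]
  gcongr
  simpa only [Nat.cast_one, one_mul, ← sq] using abs_sum_mul_le_sum_sq_of_sum_sq_eq _ hsq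

lemma abs_sawtoothMoment_le {a m : ℕ} (h : a.Coprime m) :
    |sawtoothMoment K a m| ≤ (m - 1) * (m - 2) / 6 := by
  rcases eq_or_ne m 0 with rfl | hm
  · norm_num [sawtoothMoment]
  exact (abs_sawtoothMoment_le_sawtoothMoment_one h).trans (sawtoothMoment_one hm).le

theorem abs_sum_fract_diff_le_general (N s i : ℕ) (hgcd : Nat.gcd i N = s) :
    |∑ k ∈ Finset.Icc 1 (N - 1), (k : ℚ) *
        (Int.fract ((i : ℚ) * (k : ℚ) / (N : ℚ))
          - Int.fract (((N : ℚ) - (i : ℚ)) * (k : ℚ) / (N : ℚ)))|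
      ≤ 1 / 6 * ((N : ℚ) / (s : ℚ) - 1) * ((N : ℚ) - 2 * (s : ℚ)) := by
  obtain ⟨a, m, hco, hi, hN⟩ := Nat.exists_coprime i N
  rw [hgcd] at hi hN
  subst hi hN
  have hrhs : 1 / 6 * (((m * s : ℕ) : ℚ) / s - 1) * (((m * s : ℕ) : ℚ) - 2 * s)
      = s * ((m - 1) * (m - 2) / 6) := by
    rcases eq_or_ne s 0 with rfl | hs
    · simp
    push_cast
    field_simp
  rw [sum_Icc_mul_fract_sub_fract, sawtoothMoment_mul_right, hrhs, abs_mul, Nat.abs_cast]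
  exact mul_le_mul_of_nonneg_left (abs_sawtoothMoment_le hco) s.cast_nonneg

/-- For `N ≥ 2`, a proper divisor `σ` of `N`, and `1 ≤ i ≤ N−1` with
`gcd(i,N) = σ`, `|Σ_{k=1}^{N−1} k·({ik/N} − {(N−i)k/N})| ≤ (1/6)(N/σ − 1)(N − 2σ)`. -/
theorem abs_sum_fract_diff_le (N s i : ℕ) (hN : 2 ≤ N) (hdvd : s ∣ N) (hne : s ≠ N)
    (hi1 : 1 ≤ i) (hi2 : i ≤ N - 1) (hgcd : Nat.gcd i N = s) :
    |∑ k ∈ Finset.Icc 1 (N - 1), (k : ℚ) *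
        (Int.fract ((i : ℚ) * (k : ℚ) / (N : ℚ))
          - Int.fract (((N : ℚ) - (i : ℚ)) * (k : ℚ) / (N : ℚ)))|
      ≤ 1 / 6 * ((N : ℚ) / (s : ℚ) - 1) * ((N : ℚ) - 2 * (s : ℚ)) :=
  abs_sum_fract_diff_le_general N s i hgcd
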